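/- Let G = G_0 be a bipartite graph on n ≥ 2 vertices having a perfect matching, let k = ⌈log₂ n⌉ − 1, and let w_0, ..., w_{k−1} be positive integer weight functions on the edges of G. Define inductively G_{i+1} to be the subgraph of G_i consisting of the union of all perfect matchings of G_i of minimum w_i-weight, and suppose that for every 0 ≤ i ≤ k−1, every cycle of G_i of length at most 2^{i+2} has nonzero circulation under w_i. Let B be an integer exceeding the w_i-weight of every perfect matching of G for every i, and define w = Σ_{i=0}^{k−1} w_i · B^{k−1−i}. Then w is isolating for G: G has a unique perfect matching of minimum w-weight. -/

import Mathlib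

/-- `M` is a perfect matching of the graph on vertex set `V` with edge set `F`:
`M` consists of edges of `F` and every vertex lies in exactly one edge of `M`. -/
def IsPMof {V : Type*} (F M : Finset (Sym2 V)) : Prop :=
  M ⊆ F ∧ ∀ v : V, ∃! e, e ∈ M ∧ v ∈ e

/-- The weight of a matching is the sum of the weights of its edges. -/
def matchWeight {V : Type*} (w : Sym2 V → ℤ) (M : Finset (Sym2 V)) : ℤ := ∑ e ∈ M, w e

/-- The alternating sum `a₁ - a₂ + a₃ - ⋯` of a list. -/
def altSum : List ℤ → ℤ
  | [] => 0
  | a :: l => a - altSum l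

/-- The circulation of a cycle (given by the list of its edges in cyclic order):
the absolute value of the alternating sum of the edge weights. -/
def circulation {V : Type*} (w : Sym2 V → ℤ) (l : List (Sym2 V)) : ℤ :=
  |altSum (l.map w)|

/-!
For a bipartite edge set `F` and weights `w`, let `minWeightSupport F w` be the union of the
minimum-weight perfect matchings of `F`. Everything rests on an exchange argument: if `M_i`
are minimum-weight perfect matchings, `b_i ∈ M_i`, and edges `a_j ∈ F` meet every vertex as
often as the `b_i` do, then `∑ M_i - ∑ b_i + ∑ a_j` is a regular bipartite multigraph, which
splits into perfect matchings of `F` by Hall's theorem; hence `∑ w(b_i) ≤ ∑ w(a_j)`. It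
follows that every perfect matching of `minWeightSupport F w` has minimum weight, and that
every closed walk of even length in it has zero circulation.

Two distinct perfect matchings of `G_k` yield an alternating cycle of length at most
`n ≤ 2^(k+1)`, which would have zero `w_{k-1}`-circulation; so `G_k` has a unique perfect
matching `M⋆`. Any other perfect matching `M` of `G` has the same `w_j`-weight as `M⋆` up to
the first level `i` at which it leaves `G_{i+1}`, where it is strictly heavier. As all the
weights lie in `[0, B)`, this leading base-`B` digit decides the comparison of the combined
weights.
-/

open Finset SimpleGraph

section

variable {V : Type*}

section PerfectMatching

variable {F F' M N : Finset (Sym2 V)}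

theorem existsUnique_mem_and_mem_iff (M : Finset (Sym2 V)) (v : V) :
    (∃! e, e ∈ M ∧ v ∈ e) ↔ ∃! u, s(v, u) ∈ M := by
  constructor
  · rintro ⟨e, ⟨he, hv⟩, huniq⟩
    obtain ⟨u, rfl⟩ := Sym2.mem_iff_exists.1 hv
    exact ⟨u, he, fun u' hu' => Sym2.congr_right.1 (huniq _ ⟨hu', Sym2.mem_mk_left v u'⟩)⟩
  · rintro ⟨u, hu, huniq⟩
    refine ⟨s(v, u), ⟨hu, Sym2.mem_mk_left v u⟩, fun e ⟨he, hv⟩ => ?_⟩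
    obtain ⟨u', rfl⟩ := Sym2.mem_iff_exists.1 hv
    rw [huniq u' he]

theorem isPMof_iff : IsPMof F M ↔ M ⊆ F ∧ ∀ v, ∃! u, s(v, u) ∈ M := by
  simp only [IsPMof, existsUnique_mem_and_mem_iff]

theorem IsPMof.mono (hM : IsPMof F M) (h : M ⊆ F') : IsPMof F' M := ⟨h, hM.2⟩

noncomputable def IsPMof.partner (hM : IsPMof F M) (v : V) : V :=
  ((isPMof_iff.1 hM).2 v).exists.choose

theorem IsPMof.partner_mem (hM : IsPMof F M) (v : V) : s(v, hM.partner v) ∈ M :=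
  ((isPMof_iff.1 hM).2 v).exists.choose_spec

theorem IsPMof.eq_partner (hM : IsPMof F M) {v u : V} (h : s(v, u) ∈ M) : u = hM.partner v :=
  ((isPMof_iff.1 hM).2 v).unique h (hM.partner_mem v)

theorem IsPMof.partner_partner (hM : IsPMof F M) (v : V) : hM.partner (hM.partner v) = v :=
  (hM.eq_partner (Sym2.eq_swap ▸ hM.partner_mem v)).symm

theorem IsPMof.partner_injective (hM : IsPMof F M) : Function.Injective hM.partner :=
  Function.LeftInverse.injective hM.partner_partner

theorem IsPMof.eq_of_subset (hM : IsPMof F M) (hN : IsPMof F' N) (h : M ⊆ N) : M = N := by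
  refine subset_antisymm h fun e he => ?_
  induction e using Sym2.ind with
  | _ v u =>
    rw [hN.eq_partner he, ← hN.eq_partner (h (hM.partner_mem v))]
    exact hM.partner_mem v

theorem IsPMof.exists_partner_partner_ne (hM : IsPMof F M) (hN : IsPMof F' N) (hne : M ≠ N) :
    ∃ a, hN.partner (hM.partner a) ≠ a := by
  by_contra! h
  refine hne (hM.eq_of_subset hN fun e he => ?_)
  induction e using Sym2.ind with
  | _ v u =>
    have := hN.partner_mem (hM.partner v)
    rwa [h v, Sym2.eq_swap, ← hM.eq_partner he] at this

theorem IsPMof.card_filter_mem [DecidableEq V] (hM : IsPMof F M) (v : V) :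
    #{e ∈ M | v ∈ e} = 1 := by
  obtain ⟨e, he, huniq⟩ := hM.2 v
  exact card_eq_one.2 ⟨e, by ext e'; simpa using ⟨huniq e', fun h => h ▸ he⟩⟩

end PerfectMatching

def IsTwoColoring (F : Finset (Sym2 V)) (col : V → Bool) : Prop :=
  ∀ ⦃a b : V⦄, s(a, b) ∈ F → col a ≠ col b

section TwoColoring

variable {F F' M N : Finset (Sym2 V)} {col : V → Bool}

theorem IsTwoColoring.mono (hcol : IsTwoColoring F col) (h : F' ⊆ F) : IsTwoColoring F' col :=
  fun _ _ hab => hcol (h hab)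

theorem IsTwoColoring.ne (hcol : IsTwoColoring F col) {a b : V} (hab : s(a, b) ∈ F) : a ≠ b := by
  rintro rfl
  exact hcol hab rfl

theorem IsTwoColoring.col_partner (hcol : IsTwoColoring F col) (hM : IsPMof F M) (v : V) :
    col (hM.partner v) = !col v :=
  Bool.eq_not_iff.2 (hcol (hM.1 (hM.partner_mem v))).symm

end TwoColoring

section WeightedDegree

variable [Fintype V] {F M : Finset (Sym2 V)} {col : V → Bool} {w : Sym2 V → ℤ} {μ : ℤ}

def weightedDegree (y : Sym2 V → ℤ) (v : V) : ℤ := ∑ u, y s(v, u)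

theorem ncard_le_ncard_neighborSet_of_weightedDegree_eq {y : Sym2 V → ℤ} {r : ℤ}
    (hy : ∀ e, 0 ≤ y e) (hloop : ∀ a, y s(a, a) = 0) (hr : 0 < r)
    (hdeg : ∀ v, weightedDegree y v = r) (s : Set V) :
    s.ncard ≤ (⋃ x ∈ s, (fromEdgeSet {e | 0 < y e}).neighborSet x).ncard := by
  classical
  set S := univ.filter (· ∈ s)
  set T := univ.filter (· ∈ ⋃ x ∈ s, (fromEdgeSet {e | 0 < y e}).neighborSet x)
  have hS : s = ↑S := by ext; simp [S]
  have hT : (⋃ x ∈ s, (fromEdgeSet {e | 0 < y e}).neighborSet x) = ↑T := by ext; simp [T]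
  rw [hT, hS, Set.ncard_coe_finset, Set.ncard_coe_finset]
  have hdeg' : ∀ v, ∑ u, y s(v, u) = r := hdeg
  have key : r * #S ≤ r * #T := calc
    r * #S = ∑ a ∈ S, ∑ b, y s(a, b) := by simp [hdeg', mul_comm]
    _ = ∑ a ∈ S, ∑ b ∈ T, y s(a, b) := by
      refine sum_congr rfl fun a ha => (sum_subset (subset_univ T) fun b _ hb => ?_).symm
      by_contra hab
      have hba : a ≠ b := by rintro rfl; exact hab (hloop a)
      refine hb (mem_filter.2 ⟨mem_univ b, Set.mem_biUnion (x := a) (by simpa [S] using ha) ?_⟩)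
      simpa [hba] using lt_of_le_of_ne (hy _) (Ne.symm hab)
    _ = ∑ b ∈ T, ∑ a ∈ S, y s(a, b) := sum_comm
    _ ≤ ∑ b ∈ T, ∑ a, y s(b, a) := sum_le_sum fun b _ => by
      simp_rw [Sym2.eq_swap (a := b)]
      exact sum_le_sum_of_subset_of_nonneg (subset_univ S) fun a _ _ => hy _
    _ = r * #T := by simp [hdeg', mul_comm]
  exact_mod_cast le_of_mul_le_mul_left key hr

theorem IsTwoColoring.exists_isPMof_of_weightedDegree_eq {y : Sym2 V → ℤ} {r : ℤ}
    (hcol : IsTwoColoring F col) (hy : ∀ e, 0 ≤ y e) (hyF : ∀ e, y e ≠ 0 → e ∈ F) (hr : 0 < r)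
    (hdeg : ∀ v, weightedDegree y v = r) : ∃ N, IsPMof F N ∧ ∀ e ∈ N, 0 < y e := by
  classical
  have hloop (a : V) : y s(a, a) = 0 := by
    by_contra h
    exact hcol.ne (hyF _ h) rfl
  have hbip : (fromEdgeSet {e | 0 < y e}).IsBipartiteWith {v | col v = false}
      {v | col v = true} := by
    refine ⟨Set.disjoint_left.2 fun v h1 h2 => by simp_all, fun a b hab => ?_⟩
    have := hcol (hyF _ ((fromEdgeSet_adj _).1 hab).1.ne')
    cases ha : col a <;> cases hb : col b <;> simp_all
  obtain ⟨M, hM⟩ := exists_isPerfectMatching_of_forall_ncard_le hbip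
    (ncard_le_ncard_neighborSet_of_weightedDegree_eq hy hloop hr hdeg)
  have hMy (e : Sym2 V) (he : e ∈ M.edgeSet) : 0 < y e ∧ e ∈ F := by
    have h0 : 0 < y e := (edgeSet_fromEdgeSet _ ▸ M.edgeSet_subset he).1
    exact ⟨h0, hyF e h0.ne'⟩
  refine ⟨univ.filter (· ∈ M.edgeSet), isPMof_iff.2 ⟨fun e he => (hMy e ?_).2, fun v => ?_⟩,
    fun e he => (hMy e ?_).1⟩
  · exact (mem_filter.1 he).2
  · simpa using Subgraph.isPerfectMatching_iff.1 hM v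
  · exact (mem_filter.1 he).2

variable [DecidableEq V]

theorem IsPMof.weightedDegree_indicator (hM : IsPMof F M) (v : V) :
    weightedDegree (fun e => if e ∈ M then 1 else 0) v = 1 := by
  simp only [weightedDegree, sum_boole, Nat.cast_eq_one, card_eq_one]
  exact ⟨hM.partner v, by ext u; simpa using ⟨hM.eq_partner, fun h => h ▸ hM.partner_mem v⟩⟩

theorem weightedDegree_ite_eq (c : Sym2 V) (v : V) :
    weightedDegree (fun e => if c = e then 1 else 0) v = if v ∈ c then 1 else 0 := by
  unfold weightedDegree
  split_ifs with hv
  · obtain ⟨u, rfl⟩ := Sym2.mem_iff_exists.1 hv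
    simp only [Sym2.congr_right, sum_ite_eq, mem_univ, if_true]
  · exact sum_eq_zero fun u _ => if_neg (by rintro rfl; exact hv (Sym2.mem_mk_left v u))

theorem sum_indicator_mul_eq_matchWeight (M : Finset (Sym2 V)) (w : Sym2 V → ℤ) :
    ∑ e, (if e ∈ M then 1 else 0) * w e = matchWeight w M := by
  simp [matchWeight]

theorem IsTwoColoring.mul_le_sum_mul_of_weightedDegree_eq (hcol : IsTwoColoring F col)
    (hμ : ∀ N, IsPMof F N → μ ≤ matchWeight w N) (r : ℕ) {y : Sym2 V → ℤ}
    (hy : ∀ e, 0 ≤ y e) (hyF : ∀ e, y e ≠ 0 → e ∈ F) (hdeg : ∀ v, weightedDegree y v = r) :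
    r * μ ≤ ∑ e, y e * w e := by
  induction r generalizing y with
  | zero =>
    have hy0 (e : Sym2 V) : y e = 0 := by
      induction e using Sym2.ind with
      | _ a b =>
        have h0 : ∑ u, y s(a, u) = 0 := by simpa [weightedDegree] using hdeg a
        linarith [single_le_sum (fun u _ => hy s(a, u)) (mem_univ b), hy s(a, b)]
    simp [hy0]
  | succ r ih =>
    obtain ⟨N, hN, hNy⟩ :=
      hcol.exists_isPMof_of_weightedDegree_eq hy hyF (by positivity) hdeg
    have hrest := ih (y := fun e => y e - if e ∈ N then 1 else 0)
      (fun e => by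
        split_ifs with he
        · linarith [hNy e he]
        · simpa using hy e)
      (fun e he => by
        by_cases heN : e ∈ N
        · exact hN.1 heN
        · exact hyF e (by simpa [heN] using he))
      (fun v => by
        have h1 := hdeg v
        have h2 := hN.weightedDegree_indicator v
        simp only [weightedDegree] at h1 h2 ⊢
        rw [sum_sub_distrib, h1, h2]
        push_cast
        ring)
    simp only [sub_mul, sum_sub_distrib, sum_indicator_mul_eq_matchWeight] at hrest
    push_cast
    linarith [hμ N hN]

theorem IsTwoColoring.sum_weight_le_of_card_filter_eq (hcol : IsTwoColoring F col)
    (hμ : ∀ N, IsPMof F N → μ ≤ matchWeight w N) {ι κ : Type*}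
    (s : Finset ι) (M : ι → Finset (Sym2 V)) (b : ι → Sym2 V)
    (hM : ∀ i ∈ s, IsPMof F (M i) ∧ matchWeight w (M i) = μ ∧ b i ∈ M i)
    (t : Finset κ) (a : κ → Sym2 V) (ha : ∀ j ∈ t, a j ∈ F)
    (hdeg : ∀ v, #{j ∈ t | v ∈ a j} = #{i ∈ s | v ∈ b i}) :
    ∑ i ∈ s, w (b i) ≤ ∑ j ∈ t, w (a j) := by
  let y : Sym2 V → ℤ := fun e => ∑ i ∈ s, ((if e ∈ M i then 1 else 0) - if b i = e then 1 else 0)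
    + ∑ j ∈ t, if a j = e then 1 else 0
  have hy (e : Sym2 V) : 0 ≤ y e := by
    refine add_nonneg (sum_nonneg fun i hi => ?_) (sum_nonneg fun _ _ => by positivity)
    by_cases hb : b i = e
    · simp [hb ▸ (hM i hi).2.2, hb]
    · simp only [hb, if_false, sub_zero]
      positivity
  have hyF (e : Sym2 V) (he : y e ≠ 0) : e ∈ F := by
    by_contra heF
    have hMe (i : ι) (hi : i ∈ s) : e ∉ M i := fun h => heF ((hM i hi).1.1 h)
    refine he ?_
    simp only [y]
    rw [sum_eq_zero fun i hi => ?_,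
      sum_eq_zero fun j hj => if_neg fun (h : a j = e) => heF (h ▸ ha j hj), add_zero]
    have hbe : b i ≠ e := fun h => hMe i hi (h ▸ (hM i hi).2.2)
    simp [hMe i hi, hbe]
  have hdegy (v : V) : weightedDegree y v = #s := by
    have h1 (i : ι) (hi : i ∈ s) := (hM i hi).1.weightedDegree_indicator v
    have h2 := weightedDegree_ite_eq (v := v)
    simp only [weightedDegree] at h1 h2 ⊢
    simp only [y, sum_add_distrib]
    rw [sum_comm (s := univ) (t := s), sum_comm (s := univ) (t := t)]
    simp only [sum_sub_distrib, h2]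
    rw [sum_congr rfl h1]
    simp [sum_boole, hdeg v]
  have hweight : ∑ e, y e * w e = #s * μ - ∑ i ∈ s, w (b i) + ∑ j ∈ t, w (a j) := by
    simp only [y, add_mul, sum_mul, sub_mul, sum_add_distrib]
    rw [sum_comm (s := univ) (t := s), sum_comm (s := univ) (t := t)]
    simp only [sum_sub_distrib, sum_indicator_mul_eq_matchWeight]
    rw [sum_congr rfl fun i hi => by rw [(hM i hi).2.1]]
    simp
  have := hcol.mul_le_sum_mul_of_weightedDegree_eq hμ #s hy hyF hdegy
  linarith

end WeightedDegree

theorem sum_range_add_one_eq_of_eq {β : Type*} [AddCancelCommMonoid β] (f : ℕ → β) {T : ℕ}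
    (h : f T = f 0) : ∑ t ∈ range T, f (t + 1) = ∑ t ∈ range T, f t :=
  add_right_cancel ((sum_range_succ' f T).symm.trans (h ▸ sum_range_succ f T))

theorem card_filter_mem_mk [DecidableEq V] {ι : Type*} (s : Finset ι) (x y : ι → V)
    (hxy : ∀ i ∈ s, x i ≠ y i) (v : V) :
    #{i ∈ s | v ∈ s(x i, y i)} = #{i ∈ s | x i = v} + #{i ∈ s | y i = v} := by
  classical
  rw [← card_union_of_disjoint (disjoint_filter.2 fun i hi hx hy => hxy i hi (hx.trans hy.symm)),
    ← filter_or]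
  simp [eq_comm]

def IsMinPM (F : Finset (Sym2 V)) (w : Sym2 V → ℤ) (M : Finset (Sym2 V)) : Prop :=
  IsPMof F M ∧ ∀ M', IsPMof F M' → matchWeight w M ≤ matchWeight w M'

open scoped Classical in
noncomputable def minWeightSupport (F : Finset (Sym2 V)) (w : Sym2 V → ℤ) : Finset (Sym2 V) :=
  F.filter fun e => ∃ M, IsMinPM F w M ∧ e ∈ M

section MinWeightSupport

variable {F M N : Finset (Sym2 V)} {w : Sym2 V → ℤ} {col : V → Bool}

theorem mem_minWeightSupport {e : Sym2 V} :
    e ∈ minWeightSupport F w ↔ ∃ M, IsMinPM F w M ∧ e ∈ M := by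
  simp only [minWeightSupport, mem_filter, and_iff_right_iff_imp]
  rintro ⟨M, hM, he⟩
  exact hM.1.1 he

theorem minWeightSupport_subset : minWeightSupport F w ⊆ F := by
  classical
  exact filter_subset _ _

theorem IsMinPM.subset_minWeightSupport (hM : IsMinPM F w M) : M ⊆ minWeightSupport F w :=
  fun _ he => mem_minWeightSupport.2 ⟨M, hM, he⟩

theorem IsMinPM.weight_eq (hM : IsMinPM F w M) (hN : IsMinPM F w N) :
    matchWeight w M = matchWeight w N :=
  le_antisymm (hM.2 N hN.1) (hN.2 M hM.1)

theorem IsPMof.exists_isMinPM (hM : IsPMof F M) (w : Sym2 V → ℤ) : ∃ M₀, IsMinPM F w M₀ := by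
  classical
  obtain ⟨M₀, hM₀, hmin⟩ := exists_min_image ({X ∈ F.powerset | IsPMof F X})
    (matchWeight w) ⟨M, mem_filter.2 ⟨mem_powerset.2 hM.1, hM⟩⟩
  exact ⟨M₀, (mem_filter.1 hM₀).2,
    fun M' hM' => hmin M' (mem_filter.2 ⟨mem_powerset.2 hM'.1, hM'⟩)⟩

variable [Fintype V] [DecidableEq V]

theorem IsTwoColoring.isMinPM_of_isPMof_minWeightSupport (hcol : IsTwoColoring F col)
    (hN : IsPMof (minWeightSupport F w) N) : IsMinPM F w N := by
  have hNF : IsPMof F N := hN.mono (hN.1.trans minWeightSupport_subset)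
  obtain ⟨M₀, hM₀⟩ := hNF.exists_isMinPM w
  choose! Me hMe using fun e (he : e ∈ N) => mem_minWeightSupport.1 (hN.1 he)
  have hle : matchWeight w N ≤ matchWeight w M₀ :=
    hcol.sum_weight_le_of_card_filter_eq hM₀.2 N Me id
      (fun e he => ⟨(hMe e he).1.1, (hMe e he).1.weight_eq hM₀, (hMe e he).2⟩) M₀ id
      (fun e he => hM₀.1.1 he) fun v => by simp [hM₀.1.card_filter_mem, hNF.card_filter_mem]
  exact ⟨hNF, fun M' hM' => hle.trans (hM₀.2 M' hM')⟩

theorem IsTwoColoring.sum_weight_eq_of_closed (hcol : IsTwoColoring F col) {T : ℕ}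
    {u p : ℕ → V} (hT : u T = u 0) (hup : ∀ t < T, s(u t, p t) ∈ minWeightSupport F w)
    (hpu : ∀ t < T, s(p t, u (t + 1)) ∈ minWeightSupport F w) :
    ∑ t ∈ range T, w s(u t, p t) = ∑ t ∈ range T, w s(p t, u (t + 1)) := by
  rcases T.eq_zero_or_pos with rfl | hTpos
  · simp
  obtain ⟨M₀, hM₀, -⟩ := mem_minWeightSupport.1 (hup 0 hTpos)
  have key (b a : ℕ → Sym2 V) (hb : ∀ t < T, b t ∈ minWeightSupport F w)
      (ha : ∀ t < T, a t ∈ minWeightSupport F w)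
      (hdeg : ∀ v, #{t ∈ range T | v ∈ a t} = #{t ∈ range T | v ∈ b t}) :
      ∑ t ∈ range T, w (b t) ≤ ∑ t ∈ range T, w (a t) := by
    choose! Mb hMb using fun t (ht : t ∈ range T) => mem_minWeightSupport.1 (hb t (mem_range.1 ht))
    exact hcol.sum_weight_le_of_card_filter_eq hM₀.2 (range T) Mb b
      (fun t ht => ⟨(hMb t ht).1.1, (hMb t ht).1.weight_eq hM₀, (hMb t ht).2⟩) (range T) a
      (fun t ht => minWeightSupport_subset (ha t (mem_range.1 ht))) hdeg
  have hne (t : ℕ) (ht : t ∈ range T) :=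
    hcol.ne (minWeightSupport_subset (hup t (mem_range.1 ht)))
  have hne' (t : ℕ) (ht : t ∈ range T) :=
    hcol.ne (minWeightSupport_subset (hpu t (mem_range.1 ht)))
  have hdeg (v : V) :
      #{t ∈ range T | v ∈ s(p t, u (t + 1))} = #{t ∈ range T | v ∈ s(u t, p t)} := by
    rw [card_filter_mem_mk _ _ _ hne', card_filter_mem_mk _ _ _ hne, add_comm]
    simp only [card_filter]
    rw [sum_range_add_one_eq_of_eq (fun t => if u t = v then 1 else 0) (by rw [hT])]
  exact le_antisymm (key _ _ hup hpu hdeg) (key _ _ hpu hup fun v => (hdeg v).symm)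

end MinWeightSupport

section Refinement

variable {E : ℕ → Finset (Sym2 V)} {w : ℕ → Sym2 V → ℤ} {k : ℕ}

theorem subset_of_le_of_eq_minWeightSupport
    (hE : ∀ i < k, E (i + 1) = minWeightSupport (E i) (w i)) {i j : ℕ} (hji : j ≤ i)
    (hik : i ≤ k) : E i ⊆ E j := by
  induction i, hji using Nat.le_induction with
  | base => exact subset_rfl
  | succ i _ ih => exact (hE i (by omega) ▸ minWeightSupport_subset).trans (ih (by omega))

theorem exists_isPMof_of_eq_minWeightSupport
    (hE : ∀ i < k, E (i + 1) = minWeightSupport (E i) (w i)) (hM : IsPMof (E 0) M) :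
    ∃ N, IsPMof (E k) N := by
  induction k with
  | zero => exact ⟨M, hM⟩
  | succ k ih =>
    obtain ⟨N, hN⟩ := ih fun i hi => hE i (by omega)
    obtain ⟨N₀, hN₀⟩ := hN.exists_isMinPM (w k)
    exact ⟨N₀, hN₀.1.mono (hE k (by omega) ▸ hN₀.subset_minWeightSupport)⟩

end Refinement

theorem altSum_append (l₁ l₂ : List ℤ) :
    altSum (l₁ ++ l₂) = altSum l₁ + (-1) ^ l₁.length * altSum l₂ := by
  induction l₁ with
  | nil => simp [altSum]
  | cons a l ih =>
    simp only [List.cons_append, altSum, ih, List.length_cons, pow_succ]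
    ring

theorem altSum_map_range_two_mul (h : ℕ → ℤ) (T : ℕ) :
    altSum ((List.range (2 * T)).map h) = ∑ t ∈ range T, (h (2 * t) - h (2 * t + 1)) := by
  induction T with
  | zero => simp [altSum]
  | succ T ih =>
    rw [show 2 * (T + 1) = 2 * T + 1 + 1 by ring, List.range_succ, List.range_succ,
      List.append_assoc, List.map_append, altSum_append, ih, sum_range_succ]
    simp [altSum, pow_mul]

def interleave (u p : ℕ → V) (j : ℕ) : V := if Even j then u (j / 2) else p (j / 2)

section Interleave

variable {u p : ℕ → V}

@[simp]
theorem interleave_two_mul (t : ℕ) : interleave u p (2 * t) = u t := by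
  simp [interleave]

@[simp]
theorem interleave_two_mul_add_one (t : ℕ) : interleave u p (2 * t + 1) = p t := by
  simp [interleave, Nat.add_div_of_dvd_right]

theorem interleave_zero : interleave u p 0 = u 0 := interleave_two_mul 0

theorem injOn_interleave {T : ℕ} (hu : Set.InjOn u (Set.Iio T)) (hp : Set.InjOn p (Set.Iio T))
    (hup : ∀ t s, u t ≠ p s) : Set.InjOn (interleave u p) (Set.Iio (2 * T)) := by
  intro i hi j hj hij
  simp only [Set.mem_Iio] at hi hj
  obtain ⟨t, rfl | rfl⟩ := Nat.even_or_odd' i <;> obtain ⟨s, rfl | rfl⟩ := Nat.even_or_odd' j <;>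
    simp only [interleave_two_mul, interleave_two_mul_add_one] at hij
  · rw [hu (by simp; omega) (by simp; omega) hij]
  · exact absurd hij (hup t s)
  · exact absurd hij.symm (hup s t)
  · rw [hp (by simp; omega) (by simp; omega) hij]

end Interleave

def walkOfSeq (H : SimpleGraph V) (x : ℕ → V) :
    (m : ℕ) → (∀ j < m, H.Adj (x j) (x (j + 1))) → H.Walk (x 0) (x m)
  | 0, _ => .nil
  | m + 1, h => (walkOfSeq H x m fun j hj => h j (by omega)).concat (h m (by omega))

section WalkOfSeq

variable {H : SimpleGraph V} (x : ℕ → V)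

theorem edges_walkOfSeq (m : ℕ) (h : ∀ j < m, H.Adj (x j) (x (j + 1))) :
    (walkOfSeq H x m h).edges = (List.range m).map fun j => s(x j, x (j + 1)) := by
  induction m with
  | zero => rfl
  | succ m ih => simp [walkOfSeq, ih, List.range_succ]

theorem support_walkOfSeq (m : ℕ) (h : ∀ j < m, H.Adj (x j) (x (j + 1))) :
    (walkOfSeq H x m h).support = (List.range (m + 1)).map x := by
  induction m with
  | zero => rfl
  | succ m ih => simp [walkOfSeq, ih, List.range_succ (n := m + 1)]

theorem exists_isCycle_of_injOn {m : ℕ} (hm : 3 ≤ m) (hadj : ∀ j < m, H.Adj (x j) (x (j + 1)))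
    (hinj : Set.InjOn x (Set.Iio m)) (hx : x m = x 0) :
    ∃ c : H.Walk (x 0) (x 0),
      c.IsCycle ∧ c.edges = (List.range m).map fun j => s(x j, x (j + 1)) := by
  let c := (walkOfSeq H x m hadj).copy rfl hx
  have hlen : c.length = m := by
    rw [← Walk.length_edges, Walk.edges_copy, edges_walkOfSeq, List.length_map, List.length_range]
  refine ⟨c, Walk.isCycle_iff_isPath_tail_and_le_length.2 ⟨?_, hlen ▸ hm⟩, by
    rw [Walk.edges_copy, edges_walkOfSeq]⟩
  have hnil : ¬ c.Nil := fun h => by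
    rw [← Walk.length_eq_zero_iff] at h
    omega
  rw [Walk.isPath_def, Walk.support_tail_of_not_nil _ hnil, Walk.support_copy, support_walkOfSeq,
    List.range_succ_eq_map, List.map_cons, List.tail_cons, List.map_map]
  refine List.Nodup.map_on (fun i hi j hj hij => ?_) List.nodup_range
  simp only [List.mem_range] at hi hj
  by_cases him : i + 1 = m <;> by_cases hjm : j + 1 = m
  · omega
  · have := hinj (x₁ := 0) (x₂ := j + 1) (by simp; omega) (by simp; omega)
      (by rw [← hx, ← him]; exact hij)
    omega
  · have := hinj (x₁ := i + 1) (x₂ := 0) (by simp; omega) (by simp; omega)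
      (by rw [← hx, ← hjm]; exact hij)
    omega
  · have := hinj (by simp; omega : i + 1 ∈ Set.Iio m) (by simp; omega : j + 1 ∈ Set.Iio m) hij
    omega

end WalkOfSeq

theorem exists_isCycle_interleave {H : SimpleGraph V} {T : ℕ} (hT : 2 ≤ T) {u p : ℕ → V}
    (hadj : ∀ t < T, H.Adj (u t) (p t) ∧ H.Adj (p t) (u (t + 1)))
    (hinj : Set.InjOn (interleave u p) (Set.Iio (2 * T))) (hu : u T = u 0) :
    ∃ c : H.Walk (u 0) (u 0), c.IsCycle ∧ c.length = 2 * T ∧ ∀ w : Sym2 V → ℤ,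
      altSum (c.edges.map w) = ∑ t ∈ range T, (w s(u t, p t) - w s(p t, u (t + 1))) := by
  have hadj' (j : ℕ) (hj : j < 2 * T) :
      H.Adj (interleave u p j) (interleave u p (j + 1)) := by
    obtain ⟨t, rfl | rfl⟩ := Nat.even_or_odd' j
    · simpa using (hadj t (by omega)).1
    · simpa [show 2 * t + 1 + 1 = 2 * (t + 1) by ring] using (hadj t (by omega)).2
  obtain ⟨c, hc, hedges⟩ := exists_isCycle_of_injOn (interleave u p) (by omega) hadj' hinj
    (by simp [hu, interleave_zero])
  refine ⟨c.copy interleave_zero interleave_zero, by simpa using hc, ?_, fun w => ?_⟩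
  · rw [Walk.length_copy, ← Walk.length_edges, hedges, List.length_map,
      List.length_range]
  · rw [Walk.edges_copy, hedges, List.map_map, altSum_map_range_two_mul]
    simp [show ∀ t : ℕ, 2 * t + 1 + 1 = 2 * (t + 1) by intro; ring]

section Isolation

variable [Fintype V] {F N N' : Finset (Sym2 V)} {col : V → Bool}

theorem IsTwoColoring.exists_isCycle_of_ne (hcol : IsTwoColoring F col) (hN : IsPMof F N)
    (hN' : IsPMof F N') (hne : N ≠ N') :
    ∃ (T : ℕ) (u p : ℕ → V) (c : (fromEdgeSet (F : Set (Sym2 V))).Walk (u 0) (u 0)),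
      c.IsCycle ∧ c.length ≤ Fintype.card V ∧ u T = u 0 ∧
      (∀ t, s(u t, p t) ∈ N ∧ s(p t, u (t + 1)) ∈ N') ∧ ∀ w : Sym2 V → ℤ,
        altSum (c.edges.map w) = ∑ t ∈ range T, (w s(u t, p t) - w s(p t, u (t + 1))) := by
  set f := hN.partner
  set g := hN'.partner
  set σ := g ∘ f
  have hf (v : V) : col (f v) = !col v := hcol.col_partner hN v
  have hg (v : V) : col (g v) = !col v := hcol.col_partner hN' v
  have hσcol (t : ℕ) (v : V) : col (σ^[t] v) = col v := by
    induction t with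
    | zero => rfl
    | succ t ih => simp [Function.iterate_succ_apply', σ, hf, hg, ih]
  obtain ⟨a, ha⟩ : ∃ a, σ a ≠ a := hN.exists_partner_partner_ne hN' hne
  set T := Function.minimalPeriod σ a
  have hσinj : σ.Injective := hN'.partner_injective.comp hN.partner_injective
  have hTpos : 0 < T := Function.minimalPeriod_pos_of_mem_periodicPts (hσinj.mem_periodicPts a)
  have hT : 2 ≤ T := by
    by_contra h
    exact ha (Function.minimalPeriod_eq_one_iff_isFixedPt.1 (by omega))
  let u (t : ℕ) := σ^[t] a
  have hu : u T = u 0 := Function.iterate_minimalPeriod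
  have huinj : Set.InjOn u (Set.Iio T) := Function.iterate_injOn_Iio_minimalPeriod
  -- the even positions `u t` have the colour of `a`, the odd positions `f (u t)` the other one
  have hinj : Set.InjOn (interleave u (f ∘ u)) (Set.Iio (2 * T)) :=
    injOn_interleave huinj (hN.partner_injective.injOn.comp huinj (Set.mapsTo_univ _ _))
      fun t s h => by simpa [u, hσcol, hf] using congr_arg col h
  have hmem (t : ℕ) : s(u t, f (u t)) ∈ N ∧ s(f (u t), u (t + 1)) ∈ N' := by
    have : u (t + 1) = g (f (u t)) := Function.iterate_succ_apply' σ t a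
    exact ⟨hN.partner_mem _, this ▸ hN'.partner_mem _⟩
  have hadj (t : ℕ) (_ : t < T) :
      (fromEdgeSet (F : Set (Sym2 V))).Adj (u t) (f (u t)) ∧
        (fromEdgeSet (F : Set (Sym2 V))).Adj (f (u t)) (u (t + 1)) := by
    simp only [fromEdgeSet_adj, mem_coe]
    exact ⟨⟨hN.1 (hmem t).1, hcol.ne (hN.1 (hmem t).1)⟩,
      ⟨hN'.1 (hmem t).2, hcol.ne (hN'.1 (hmem t).2)⟩⟩
  obtain ⟨c, hc, hlen, halt⟩ := exists_isCycle_interleave hT hadj hinj hu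
  refine ⟨T, u, f ∘ u, c, hc, ?_, hu, hmem, halt⟩
  calc c.length = #(range (2 * T)) := by rw [hlen, card_range]
    _ ≤ #(univ : Finset V) :=
      card_le_card_of_injOn _ (fun _ _ => mem_univ _) (by simpa [Set.InjOn] using hinj)
    _ = Fintype.card V := card_univ

theorem IsTwoColoring.eq_of_card_lt_three (hcol : IsTwoColoring F col)
    (hV : Fintype.card V < 3) (hN : IsPMof F N) (hN' : IsPMof F N') : N = N' := by
  by_contra hne
  obtain ⟨_, _, _, c, hc, hlen, -⟩ := hcol.exists_isCycle_of_ne hN hN' hne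
  have := hc.three_le_length
  omega

variable [DecidableEq V]

theorem IsTwoColoring.eq_of_isPMof_minWeightSupport {w : Sym2 V → ℤ}
    (hcol : IsTwoColoring F col)
    (hcirc : ∀ (v : V) (c : (fromEdgeSet (F : Set (Sym2 V))).Walk v v),
      c.IsCycle → c.length ≤ Fintype.card V → circulation w c.edges ≠ 0)
    (hN : IsPMof (minWeightSupport F w) N) (hN' : IsPMof (minWeightSupport F w) N') : N = N' := by
  by_contra hne
  obtain ⟨T, u, p, c, hc, hlen, hu, hmem, halt⟩ := hcol.exists_isCycle_of_ne
    (hN.mono (hN.1.trans minWeightSupport_subset)) (hN'.mono (hN'.1.trans minWeightSupport_subset))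
    hne
  refine hcirc _ c hc hlen ?_
  rw [circulation, halt, sum_sub_distrib, hcol.sum_weight_eq_of_closed hu
    (fun t _ => hN.1 (hmem t).1) (fun t _ => hN'.1 (hmem t).2), sub_self, abs_zero]

variable {E : ℕ → Finset (Sym2 V)} {w : ℕ → Sym2 V → ℤ} {k : ℕ}

theorem IsTwoColoring.isPMof_or_exists_lt_of_eq_minWeightSupport (hcol : IsTwoColoring (E 0) col)
    (hE : ∀ i < k, E (i + 1) = minWeightSupport (E i) (w i)) {M M' : Finset (Sym2 V)}
    (hM : IsPMof (E 0) M) (hM' : IsPMof (E k) M') :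
    IsPMof (E k) M ∨ ∃ i < k, (∀ j < i, matchWeight (w j) M = matchWeight (w j) M') ∧
      matchWeight (w i) M' < matchWeight (w i) M := by
  suffices h : ∀ i ≤ k, (M ⊆ E i ∧ ∀ j < i, matchWeight (w j) M = matchWeight (w j) M') ∨
      ∃ j < i, (∀ l < j, matchWeight (w l) M = matchWeight (w l) M') ∧
        matchWeight (w j) M' < matchWeight (w j) M by
    rcases h k le_rfl with h | h
    · exact Or.inl (hM.mono h.1)
    · exact Or.inr h
  intro i hik
  induction i with
  | zero => exact Or.inl ⟨hM.1, by simp⟩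
  | succ i ih =>
    rcases ih (by omega) with ⟨hMi, heq⟩ | ⟨j, hji, hj⟩
    · have hcoli := hcol.mono (subset_of_le_of_eq_minWeightSupport hE (Nat.zero_le i) (by omega))
      have hM'min : IsMinPM (E i) (w i) M' := hcoli.isMinPM_of_isPMof_minWeightSupport
        (hM'.mono (hE i (by omega) ▸ hM'.1.trans (subset_of_le_of_eq_minWeightSupport hE
          (by omega) le_rfl)))
      by_cases hMmin : IsMinPM (E i) (w i) M
      · refine Or.inl ⟨hE i (by omega) ▸ hMmin.subset_minWeightSupport, fun j hj => ?_⟩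
        rcases Nat.lt_succ_iff_lt_or_eq.1 hj with hj | rfl
        · exact heq j hj
        · exact hMmin.weight_eq hM'min
      · refine Or.inr ⟨i, by omega, heq, lt_of_le_of_ne (hM'min.2 M (hM.mono hMi)) fun h => ?_⟩
        exact hMmin ⟨hM.mono hMi, fun N hN => h ▸ hM'min.2 N hN⟩
    · exact Or.inr ⟨j, by omega, hj⟩

theorem IsTwoColoring.eq_of_isPMof_of_circulation_ne_zero (hcol : IsTwoColoring (E 0) col)
    (hE : ∀ i < k, E (i + 1) = minWeightSupport (E i) (w i))
    (hcard : Fintype.card V ≤ 2 ^ (k + 1))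
    (hcirc : ∀ i < k, ∀ (v : V) (c : (fromEdgeSet (E i : Set (Sym2 V))).Walk v v),
      c.IsCycle → c.length ≤ 2 ^ (i + 2) → circulation (w i) c.edges ≠ 0)
    (hN : IsPMof (E k) N) (hN' : IsPMof (E k) N') : N = N' := by
  rcases k with _ | i
  · exact hcol.eq_of_card_lt_three (by simpa using hcard.trans_lt (by norm_num)) hN hN'
  · rw [hE i (by omega)] at hN hN'
    have hcoli := hcol.mono (subset_of_le_of_eq_minWeightSupport hE (Nat.zero_le i) (by omega))
    exact hcoli.eq_of_isPMof_minWeightSupport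
      (fun v c hc hlen => hcirc i (by omega) v c hc (hlen.trans hcard)) hN hN'

end Isolation

theorem sum_range_succ_mul_pow (c : ℕ → ℤ) (B : ℤ) (n : ℕ) :
    ∑ j ∈ range (n + 1), c j * B ^ (n - j) = B * ∑ j ∈ range n, c j * B ^ (n - 1 - j) + c n := by
  rw [sum_range_succ, Nat.sub_self, pow_zero, mul_one, mul_sum]
  congr 1
  refine sum_congr rfl fun j hj => ?_
  rw [show n - j = n - 1 - j + 1 by have := mem_range.1 hj; omega, pow_succ]
  ring

theorem sum_mul_pow_pos {c : ℕ → ℤ} {B : ℤ} {i k : ℕ} (hB : 0 ≤ B) (hik : i < k)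
    (hc0 : ∀ j < i, c j = 0) (hci : 0 < c i) (hc : ∀ j < k, i < j → 1 - B ≤ c j) :
    0 < ∑ j ∈ range k, c j * B ^ (k - 1 - j) := by
  suffices h : ∀ n, i + 1 ≤ n → n ≤ k → 1 ≤ ∑ j ∈ range n, c j * B ^ (n - 1 - j) from
    h k hik le_rfl
  intro n hn hnk
  induction n, hn using Nat.le_induction with
  | base =>
    rw [Nat.add_sub_cancel, sum_range_succ_mul_pow, sum_eq_zero fun j hj => by
      rw [hc0 j (mem_range.1 hj), zero_mul]]
    omega
  | succ n hn ih =>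
    rw [Nat.add_sub_cancel, sum_range_succ_mul_pow]
    nlinarith [ih (by omega), hc n (by omega) (by omega)]

theorem matchWeight_sum_mul (w : ℕ → Sym2 V → ℤ) (a : ℕ → ℤ) (k : ℕ) (M : Finset (Sym2 V)) :
    matchWeight (fun e => ∑ j ∈ range k, w j e * a j) M =
      ∑ j ∈ range k, matchWeight (w j) M * a j := by
  simp only [matchWeight, sum_mul]
  exact sum_comm

theorem matchWeight_sum_mul_pow_lt {w : ℕ → Sym2 V → ℤ} {B : ℤ} {i k : ℕ}
    {M M' : Finset (Sym2 V)} (hw : ∀ j < k, ∀ e, 0 ≤ w j e)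
    (hB : ∀ j < k, matchWeight (w j) M' < B) (hik : i < k)
    (heq : ∀ j < i, matchWeight (w j) M = matchWeight (w j) M')
    (hlt : matchWeight (w i) M' < matchWeight (w i) M) :
    matchWeight (fun e => ∑ j ∈ range k, w j e * B ^ (k - 1 - j)) M' <
      matchWeight (fun e => ∑ j ∈ range k, w j e * B ^ (k - 1 - j)) M := by
  have hnonneg (j : ℕ) (hj : j < k) (N : Finset (Sym2 V)) : 0 ≤ matchWeight (w j) N :=
    sum_nonneg fun e _ => hw j hj e
  rw [matchWeight_sum_mul, matchWeight_sum_mul, ← sub_pos, ← sum_sub_distrib]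
  simp_rw [← sub_mul]
  refine sum_mul_pow_pos (by linarith [hB i hik, hnonneg i hik M']) hik
    (fun j hj => sub_eq_zero.2 (heq j hj)) (sub_pos.2 hlt) fun j hj _ => ?_
  linarith [hB j hj, hnonneg j hj M]

theorem SimpleGraph.Colorable.exists_isTwoColoring {G : SimpleGraph V} [Fintype G.edgeSet]
    (h : G.Colorable 2) : ∃ col : V → Bool, IsTwoColoring G.edgeFinset col := by
  obtain ⟨C⟩ := h
  have key : ∀ x y : Fin 2, x ≠ y → decide (x = 0) ≠ decide (y = 0) := by decide
  exact ⟨fun v => decide (C v = 0), fun a b hab =>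
    key _ _ (C.valid (SimpleGraph.mem_edgeFinset.1 hab))⟩

end

theorem combined_weight_isolating_general {V : Type*} [Fintype V] [DecidableEq V]
    (G : SimpleGraph V) [DecidableRel G.Adj] (hbip : G.Colorable 2)
    (k : ℕ) (hkdef : k = Nat.clog 2 (Fintype.card V) - 1)
    (w : ℕ → Sym2 V → ℤ) (hwpos : ∀ i < k, ∀ e, 0 < w i e)
    (E : ℕ → Finset (Sym2 V))
    (hE0 : E 0 = G.edgeFinset)
    (hpm : ∃ M, IsPMof (E 0) M)
    (hEsucc : ∀ i < k, ∀ e, e ∈ E (i + 1) ↔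
      ∃ M, IsPMof (E i) M ∧
        (∀ M', IsPMof (E i) M' → matchWeight (w i) M ≤ matchWeight (w i) M') ∧ e ∈ M)
    (hcirc : ∀ i < k, ∀ (v : V)
      (c : (SimpleGraph.fromEdgeSet (↑(E i) : Set (Sym2 V))).Walk v v),
      c.IsCycle → c.length ≤ 2 ^ (i + 2) → circulation (w i) c.edges ≠ 0)
    (B : ℤ) (hB : ∀ i < k, ∀ M, IsPMof (E 0) M → matchWeight (w i) M < B) :
    ∃! M : Finset (Sym2 V), IsPMof (E 0) M ∧
      ∀ M', IsPMof (E 0) M' →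
        matchWeight (fun e => ∑ j ∈ Finset.range k, w j e * B ^ (k - 1 - j)) M ≤
          matchWeight (fun e => ∑ j ∈ Finset.range k, w j e * B ^ (k - 1 - j)) M' := by
  obtain ⟨col, hcol⟩ := hbip.exists_isTwoColoring
  rw [← hE0] at hcol
  have hE (i : ℕ) (hi : i < k) : E (i + 1) = minWeightSupport (E i) (w i) := by
    ext e
    simp only [hEsucc i hi, mem_minWeightSupport, IsMinPM, and_assoc]
  obtain ⟨M₀, hM₀⟩ := hpm
  obtain ⟨Mk, hMk⟩ := exists_isPMof_of_eq_minWeightSupport hE hM₀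
  have hMk0 : IsPMof (E 0) Mk :=
    hMk.mono (hMk.1.trans (subset_of_le_of_eq_minWeightSupport hE (Nat.zero_le k) le_rfl))
  have hcard : Fintype.card V ≤ 2 ^ (k + 1) := (Nat.clog_le_iff_le_pow (by norm_num)).1 (by omega)
  have hlt (M : Finset (Sym2 V)) (hM : IsPMof (E 0) M) (hne : M ≠ Mk) :
      matchWeight (fun e => ∑ j ∈ range k, w j e * B ^ (k - 1 - j)) Mk <
        matchWeight (fun e => ∑ j ∈ range k, w j e * B ^ (k - 1 - j)) M := by
    obtain ⟨i, hik, heq, hi⟩ := (hcol.isPMof_or_exists_lt_of_eq_minWeightSupport hE hM hMk)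
      |>.resolve_left fun h => hne (hcol.eq_of_isPMof_of_circulation_ne_zero hE hcard hcirc h hMk)
    exact matchWeight_sum_mul_pow_lt (fun j hj e => (hwpos j hj e).le)
      (fun j hj => hB j hj Mk hMk0) hik heq hi
  refine ⟨Mk, ⟨hMk0, fun M hM => ?_⟩, fun M ⟨hM, hmin⟩ => ?_⟩
  · by_cases h : M = Mk
    · rw [h]
    · exact (hlt M hM h).le
  · by_contra h
    exact (hmin Mk hMk0).not_gt (hlt M hM h)

/-- Let `G = G₀` be a bipartite graph on `n ≥ 2` vertices with a perfect matching, let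
`k = ⌈log₂ n⌉ - 1`, and let `w₀, …, w_{k-1}` be positive integer weight functions on its
edges.  Let `G_{i+1}` be the subgraph of `G_i` formed by the union of all perfect
matchings of `G_i` of minimum `w_i`-weight (here the edge sets `E i`), and suppose that
for every `i < k` every cycle of `G_i` of length at most `2^(i+2)` has nonzero
`w_i`-circulation.  Let `B` exceed the `w_i`-weight of every perfect matching of `G`
for every `i < k`, and let `w = ∑_i w_i · B^(k-1-i)`.  Then `w` is isolating for `G`:
`G` has a unique perfect matching of minimum `w`-weight. -/
theorem combined_weight_isolating {V : Type*} [Fintype V] [DecidableEq V]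
    (G : SimpleGraph V) [DecidableRel G.Adj] (hbip : G.Colorable 2)
    (hn : 2 ≤ Fintype.card V)
    (k : ℕ) (hkdef : k = Nat.clog 2 (Fintype.card V) - 1)
    (w : ℕ → Sym2 V → ℤ) (hwpos : ∀ i < k, ∀ e, 0 < w i e)
    (E : ℕ → Finset (Sym2 V))
    (hE0 : E 0 = G.edgeFinset)
    (hpm : ∃ M, IsPMof (E 0) M)
    (hEsucc : ∀ i < k, ∀ e, e ∈ E (i + 1) ↔
      ∃ M, IsPMof (E i) M ∧
        (∀ M', IsPMof (E i) M' → matchWeight (w i) M ≤ matchWeight (w i) M') ∧ e ∈ M)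
    (hcirc : ∀ i < k, ∀ (v : V)
      (c : (SimpleGraph.fromEdgeSet (↑(E i) : Set (Sym2 V))).Walk v v),
      c.IsCycle → c.length ≤ 2 ^ (i + 2) → circulation (w i) c.edges ≠ 0)
    (B : ℤ) (hB : ∀ i < k, ∀ M, IsPMof (E 0) M → matchWeight (w i) M < B) :
    ∃! M : Finset (Sym2 V), IsPMof (E 0) M ∧
      ∀ M', IsPMof (E 0) M' →
        matchWeight (fun e => ∑ j ∈ Finset.range k, w j e * B ^ (k - 1 - j)) M ≤
          matchWeight (fun e => ∑ j ∈ Finset.range k, w j e * B ^ (k - 1 - j)) M' :=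
  combined_weight_isolating_general G hbip k hkdef w hwpos E hE0 hpm hEsucc hcirc B hB
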